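/- arXiv:1906.01248 — 5 statements merged into one kernel-verified Lean document; each statement's English description precedes it below -/
import Mathlib

section
/- If P₁ ⊂ P₂ ⊂ ℝ^d are locally finite point sets such that the asymptotic densities θ(P₁) and θ(P₂) exist and are equal, and such that the asymptotic densities θ(P̂₁) and θ(P̂₂) of their sets of visible points both exist, then θ(P̂₁) = θ(P̂₂). -/
open MeasureTheory Filter Pointwise

/-- The set of points of `P` visible from the origin. -/
def visible {d : ℕ} (P : Set (Fin d → ℝ)) : Set (Fin d → ℝ) :=
  {x ∈ P | ∀ t : ℝ, t ∈ Set.Ioo (0:ℝ) 1 → t • x ∉ P}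

/-- `P` is locally finite. -/
def IsLocallyFinite {d : ℕ} (P : Set (Fin d → ℝ)) : Prop :=
  ∀ D : Set (Fin d → ℝ), Bornology.IsBounded D → (P ∩ D).Finite

/-- `P` has asymptotic density `θ`. -/
def HasDensity {d : ℕ} (P : Set (Fin d → ℝ)) (θ : ℝ) : Prop :=
  ∀ D : Set (Fin d → ℝ), Bornology.IsBounded D → volume (frontier D) = 0 → 0 < volume D →
    Tendsto (fun T : ℝ => (Nat.card (P ∩ T • D : Set (Fin d → ℝ)) : ℝ) / (volume (T • D)).toReal)
      atTop (nhds θ)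

theorem stmt2 {d : ℕ} (P₁ P₂ : Set (Fin d → ℝ)) (hsub : P₁ ⊆ P₂)
    (h₁ : IsLocallyFinite P₁) (h₂ : IsLocallyFinite P₂)
    (θ θ₁ θ₂ : ℝ) (hd₁ : HasDensity P₁ θ) (hd₂ : HasDensity P₂ θ)
    (hv₁ : HasDensity (visible P₁) θ₁) (hv₂ : HasDensity (visible P₂) θ₂) :
    θ₁ = θ₂ := by
  classical
  set D : Set (Fin d → ℝ) := Metric.ball 0 1 with hD
  have hDb : Bornology.IsBounded D := Metric.isBounded_ball
  have hDf : volume (frontier D) = 0 := by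
    rcases eq_or_ne d 0 with h | h
    · subst h
      have : D = Set.univ := by
        ext x
        simp only [hD, Metric.mem_ball, Set.mem_univ, iff_true]
        exact (Subsingleton.elim x 0) ▸ by simp
      rw [this]; simp
    · have : Nontrivial (Fin d → ℝ) := by
        haveI : NeZero d := ⟨h⟩
        infer_instance
      rw [hD, frontier_ball _ one_ne_zero]
      exact Measure.addHaar_sphere volume 0 1
  have hDv : 0 < volume D := Metric.measure_ball_pos volume 0 one_pos
  -- the four density limits
  have L1 := hv₁ D hDb hDf hDv
  have L2 := hv₂ D hDb hDf hDv
  have Lp1 := hd₁ D hDb hDf hDv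
  have Lp2 := hd₂ D hDb hDf hDv
  set f₁ : ℝ → ℝ := fun T =>
    (Nat.card (visible P₁ ∩ T • D : Set (Fin d → ℝ)) : ℝ) / (volume (T • D)).toReal with hf₁
  set f₂ : ℝ → ℝ := fun T =>
    (Nat.card (visible P₂ ∩ T • D : Set (Fin d → ℝ)) : ℝ) / (volume (T • D)).toReal with hf₂
  set g₁ : ℝ → ℝ := fun T =>
    (Nat.card (P₁ ∩ T • D : Set (Fin d → ℝ)) : ℝ) / (volume (T • D)).toReal with hg₁
  set g₂ : ℝ → ℝ := fun T =>
    (Nat.card (P₂ ∩ T • D : Set (Fin d → ℝ)) : ℝ) / (volume (T • D)).toReal with hg₂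
  -- key pointwise bound for T > 0
  have key : ∀ T : ℝ, 0 < T → |f₁ T - f₂ T| ≤ g₂ T - g₁ T := by
    intro T hT
    have hball : T • D = Metric.ball (0 : Fin d → ℝ) T := by
      rw [hD, smul_ball (ne_of_gt hT), smul_zero, Real.norm_of_nonneg hT.le, mul_one]
    set B := T • D with hB
    have hBb : Bornology.IsBounded B := by rw [hball]; exact Metric.isBounded_ball
    have hfin₂ : (P₂ ∩ B).Finite := h₂ B hBb
    have hfin₁ : (P₁ ∩ B).Finite := h₁ B hBb
    have hfinΔ : ((P₂ \ P₁) ∩ B).Finite := hfin₂.subset (by intro x hx; exact ⟨hx.1.1, hx.2⟩)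
    have hfinV₁ : (visible P₁ ∩ B).Finite := hfin₁.subset (by intro x hx; exact ⟨hx.1.1, hx.2⟩)
    have hfinV₂ : (visible P₂ ∩ B).Finite := hfin₂.subset (by intro x hx; exact ⟨hx.1.1, hx.2⟩)
    -- (a) V₂ ∩ B ⊆ (V₁ ∩ B) ∪ ((P₂ \ P₁) ∩ B)
    have hsubA : visible P₂ ∩ B ⊆ (visible P₁ ∩ B) ∪ ((P₂ \ P₁) ∩ B) := by
      rintro x ⟨⟨hxP₂, hvis⟩, hxB⟩
      by_cases hx1 : x ∈ P₁
      · exact Or.inl ⟨⟨hx1, fun t ht hmem => hvis t ht (hsub hmem)⟩, hxB⟩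
      · exact Or.inr ⟨⟨hxP₂, hx1⟩, hxB⟩
    have cardA : (visible P₂ ∩ B).ncard ≤ (visible P₁ ∩ B).ncard + ((P₂ \ P₁) ∩ B).ncard :=
      le_trans (Set.ncard_le_ncard hsubA (hfinV₁.union hfinΔ)) (Set.ncard_union_le _ _)
    -- (b) injection from (V₁ \ V₂) ∩ B into (P₂ \ P₁) ∩ B
    have hex : ∀ x ∈ (visible P₁ \ visible P₂) ∩ B,
        ∃ t : ℝ, t ∈ Set.Ioo (0:ℝ) 1 ∧ t • x ∈ P₂ := by
      rintro x ⟨⟨⟨hxP₁, _⟩, hnv⟩, _⟩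
      by_contra hcon
      push_neg at hcon
      exact hnv ⟨hsub hxP₁, fun t ht => hcon t ht⟩
    set F : (Fin d → ℝ) → (Fin d → ℝ) := fun x =>
      if h : ∃ t : ℝ, t ∈ Set.Ioo (0:ℝ) 1 ∧ t • x ∈ P₂ then h.choose • x else 0 with hF
    have hne : ∀ x ∈ (visible P₁ \ visible P₂) ∩ B, x ≠ 0 := by
      rintro x ⟨⟨⟨hxP₁, hvis⟩, _⟩, _⟩ rfl
      exact hvis (1/2) (by norm_num) (by simpa using hxP₁)
    have hFspec : ∀ x ∈ (visible P₁ \ visible P₂) ∩ B,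
        ∃ t : ℝ, t ∈ Set.Ioo (0:ℝ) 1 ∧ t • x ∈ P₂ ∧ F x = t • x := by
      intro x hx
      have h := hex x hx
      refine ⟨h.choose, h.choose_spec.1, h.choose_spec.2, ?_⟩
      simp only [hF, dif_pos h]
    have hmaps : Set.MapsTo F ((visible P₁ \ visible P₂) ∩ B) ((P₂ \ P₁) ∩ B) := by
      intro x hx
      obtain ⟨t, ht, htP₂, hFx⟩ := hFspec x hx
      obtain ⟨⟨⟨⟨hxP₁, hvis⟩, _⟩, hxB⟩⟩ : ((x ∈ visible P₁ ∧ x ∉ visible P₂) ∧ x ∈ B) ∧ True :=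
        ⟨hx, trivial⟩
      refine ⟨⟨hFx ▸ htP₂, hFx ▸ hvis t ht⟩, ?_⟩
      rw [hball] at hxB ⊢
      rw [hFx, mem_ball_zero_iff, norm_smul, Real.norm_of_nonneg ht.1.le]
      have hx0 : x ≠ 0 := hne x hx
      have hxn : 0 < ‖x‖ := norm_pos_iff.mpr hx0
      calc t * ‖x‖ < 1 * ‖x‖ := by
            exact mul_lt_mul_of_pos_right ht.2 hxn
        _ = ‖x‖ := one_mul _
        _ < T := by rwa [mem_ball_zero_iff] at hxB
    have hinj : Set.InjOn F ((visible P₁ \ visible P₂) ∩ B) := by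
      intro x hx y hy hxy
      obtain ⟨t, ht, htP₂, hFx⟩ := hFspec x hx
      obtain ⟨s, hs, hsP₂, hFy⟩ := hFspec y hy
      rw [hFx, hFy] at hxy
      have hx0 : x ≠ 0 := hne x hx
      have hy0 : y ≠ 0 := hne y hy
      have hvx : ∀ r : ℝ, r ∈ Set.Ioo (0:ℝ) 1 → r • x ∉ P₁ := hx.1.1.2
      have hvy : ∀ r : ℝ, r ∈ Set.Ioo (0:ℝ) 1 → r • y ∉ P₁ := hy.1.1.2
      have hxP₁ : x ∈ P₁ := hx.1.1.1
      have hyP₁ : y ∈ P₁ := hy.1.1.1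
      -- y = (s⁻¹ * t) • x
      have hy' : y = (s⁻¹ * t) • x := by
        rw [mul_smul, hxy, ← mul_smul, inv_mul_cancel₀ (ne_of_gt hs.1), one_smul]
      set r := s⁻¹ * t with hr
      have hr0 : 0 < r := mul_pos (inv_pos.mpr hs.1) ht.1
      rcases lt_trichotomy r 1 with hlt | heq | hgt
      · exact absurd (hy' ▸ hyP₁) (hvx r ⟨hr0, hlt⟩)
      · rw [hy', heq, one_smul]
      · have hx' : x = r⁻¹ • y := by
          rw [hy', ← mul_smul, inv_mul_cancel₀ (ne_of_gt hr0), one_smul]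
        exact absurd (hx' ▸ hxP₁) (hvy r⁻¹ ⟨inv_pos.mpr hr0, inv_lt_one_of_one_lt₀ hgt⟩)
    have cardInj : ((visible P₁ \ visible P₂) ∩ B).ncard ≤ ((P₂ \ P₁) ∩ B).ncard :=
      Set.ncard_le_ncard_of_injOn F hmaps hinj hfinΔ
    have hsubB : visible P₁ ∩ B ⊆ (visible P₂ ∩ B) ∪ ((visible P₁ \ visible P₂) ∩ B) := by
      rintro x ⟨hx, hxB⟩
      by_cases h : x ∈ visible P₂
      · exact Or.inl ⟨h, hxB⟩
      · exact Or.inr ⟨⟨hx, h⟩, hxB⟩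
    have cardB : (visible P₁ ∩ B).ncard ≤ (visible P₂ ∩ B).ncard + ((P₂ \ P₁) ∩ B).ncard := by
      have := Set.ncard_le_ncard hsubB
        (hfinV₂.union (hfinV₁.subset (by intro x hx; exact ⟨hx.1.1, hx.2⟩)))
      refine le_trans (le_trans this (Set.ncard_union_le _ _)) ?_
      exact add_le_add_right cardInj _
    -- (c) disjoint decomposition of P₂ ∩ B
    have hdecomp : P₂ ∩ B = (P₁ ∩ B) ∪ ((P₂ \ P₁) ∩ B) := by
      ext x
      constructor
      · rintro ⟨hx, hxB⟩
        by_cases h : x ∈ P₁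
        · exact Or.inl ⟨h, hxB⟩
        · exact Or.inr ⟨⟨hx, h⟩, hxB⟩
      · rintro (⟨hx, hxB⟩ | ⟨hx, hxB⟩)
        · exact ⟨hsub hx, hxB⟩
        · exact ⟨hx.1, hxB⟩
    have hdisj : Disjoint (P₁ ∩ B) ((P₂ \ P₁) ∩ B) := by
      rw [Set.disjoint_left]
      rintro x ⟨hx, _⟩ ⟨hx', _⟩
      exact hx'.2 hx
    have cardC : (P₂ ∩ B).ncard = (P₁ ∩ B).ncard + ((P₂ \ P₁) ∩ B).ncard := by
      rw [hdecomp, Set.ncard_union_eq hdisj hfin₁ hfinΔ]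
    -- real arithmetic
    have hvpos : (0:ℝ) < (volume B).toReal := by
      rw [hball]
      exact ENNReal.toReal_pos (ne_of_gt (Metric.measure_ball_pos volume 0 hT))
        (ne_of_lt measure_ball_lt_top)
    simp only [hf₁, hf₂, hg₁, hg₂, ← hB, Nat.card_coe_set_eq]
    rw [div_sub_div_same, div_sub_div_same, abs_div, abs_of_pos hvpos]
    rw [div_le_div_iff_of_pos_right hvpos]
    have hA' : ((visible P₂ ∩ B).ncard : ℝ)
        ≤ ((visible P₁ ∩ B).ncard : ℝ) + (((P₂ \ P₁) ∩ B).ncard : ℝ) := by exact_mod_cast cardA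
    have hB' : ((visible P₁ ∩ B).ncard : ℝ)
        ≤ ((visible P₂ ∩ B).ncard : ℝ) + (((P₂ \ P₁) ∩ B).ncard : ℝ) := by exact_mod_cast cardB
    have hC' : ((P₂ ∩ B).ncard : ℝ)
        = ((P₁ ∩ B).ncard : ℝ) + (((P₂ \ P₁) ∩ B).ncard : ℝ) := by exact_mod_cast cardC
    rw [abs_sub_le_iff]
    constructor <;> linarith
  -- conclude by squeezing
  have hsq : ∀ᶠ T in atTop, |f₁ T - f₂ T| ≤ g₂ T - g₁ T := (eventually_gt_atTop 0).mono key
  have t1 : Tendsto (fun T => |f₁ T - f₂ T|) atTop (nhds |θ₁ - θ₂|) := (L1.sub L2).abs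
  have t2 : Tendsto (fun T => g₂ T - g₁ T) atTop (nhds 0) := by
    simpa using Lp2.sub Lp1
  have habs : |θ₁ - θ₂| ≤ 0 := le_of_tendsto_of_tendsto t1 t2 hsq
  have := abs_nonpos_iff.mp habs
  linarith [sub_eq_zero.mp this]
end

section
/- Let K ⊂ ℝ be a real number field (a finite field extension of ℚ contained in ℝ), let P ⊂ K² and let α ∈ ℝ². If some line through the origin of ℝ² contains two distinct points of α + P, then the K-linear span of {1, α₁, α₂} in ℝ has dimension at most 2. If two distinct lines through the origin each contain two distinct points of α + P, then α ∈ K². -/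
set_option synthInstance.maxHeartbeats 1000000

/-- A point of `ℝ²` lies on a line through the origin, i.e. a one-dimensional
ℝ-linear subspace of `ℝ × ℝ`. -/
def OnLine (ℓ : Submodule ℝ (ℝ × ℝ)) : Prop := Module.finrank ℝ ℓ = 1

/-!
If `α + p` and `α + q` lie on a line through the origin, so does the direction `q - p`, and the
vanishing of `cross (α + p) (α + q)` is the `K`-linear equation `cross (q - p) α = cross p q` in
the coordinates of `α`, nontrivial since `q ≠ p`. One such equation makes one coordinate of `α` a
`K`-affine function of the other. Two lines give two equations whose determinant is the cross
product of the two directions, nonzero because the lines are distinct, so Cramer's rule puts `α`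
in `K²`.
-/

open Module Submodule

def cross {R : Type*} [CommRing R] (x y : R × R) : R := x.1 * y.2 - x.2 * y.1

section Lines

variable {F : Type*} [Field F]

theorem cross_eq_zero_of_mem {ℓ : Submodule F (F × F)} (hℓ : finrank F ℓ = 1) {x y : F × F}
    (hx : x ∈ ℓ) (hy : y ∈ ℓ) : cross x y = 0 := by
  rcases eq_or_ne x 0 with rfl | hx0
  · simp [cross]
  rw [eq_span_singleton_of_mem_of_finrank_eq_one hℓ hx hx0, mem_span_singleton] at hy
  obtain ⟨c, rfl⟩ := hy
  simp only [cross, Prod.smul_fst, Prod.smul_snd, smul_eq_mul]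
  ring

theorem mem_span_singleton_of_cross_eq_zero {x y : F × F} (hx : x ≠ 0) (h : cross x y = 0) :
    y ∈ F ∙ x := by
  unfold cross at h
  rw [mem_span_singleton]
  rcases eq_or_ne x.1 0 with hx₁ | hx₁
  · have hx₂ : x.2 ≠ 0 := fun hx₂ => hx (Prod.ext hx₁ hx₂)
    refine ⟨y.2 / x.2, Prod.ext ?_ ?_⟩ <;> simp only [Prod.smul_fst, Prod.smul_snd, smul_eq_mul]
    · rw [hx₁] at h ⊢
      simpa [hx₂, eq_comm] using h
    · field_simp
  · refine ⟨y.1 / x.1, Prod.ext ?_ ?_⟩ <;> simp only [Prod.smul_fst, Prod.smul_snd, smul_eq_mul]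
    · field_simp
    · field_simp
      linear_combination -h

theorem cross_ne_zero_of_mem_of_ne {ℓ₁ ℓ₂ : Submodule F (F × F)} (hℓ₁ : finrank F ℓ₁ = 1)
    (hℓ₂ : finrank F ℓ₂ = 1) (hne : ℓ₁ ≠ ℓ₂) {x y : F × F} (hx : x ∈ ℓ₁) (hx0 : x ≠ 0)
    (hy : y ∈ ℓ₂) (hy0 : y ≠ 0) : cross x y ≠ 0 := by
  intro h
  have hy₁ : y ∈ ℓ₁ := by
    rw [eq_span_singleton_of_mem_of_finrank_eq_one hℓ₁ hx hx0]
    exact mem_span_singleton_of_cross_eq_zero hx0 h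
  apply hne
  rw [eq_span_singleton_of_mem_of_finrank_eq_one hℓ₁ hy₁ hy0,
    eq_span_singleton_of_mem_of_finrank_eq_one hℓ₂ hy hy0]

theorem cross_sub_eq_of_add_mem {ℓ : Submodule F (F × F)} (hℓ : finrank F ℓ = 1)
    {α p q : F × F} (hp : α + p ∈ ℓ) (hq : α + q ∈ ℓ) : cross (q - p) α = cross p q := by
  have h := cross_eq_zero_of_mem hℓ hp hq
  simp only [cross, Prod.fst_add, Prod.snd_add, Prod.fst_sub, Prod.snd_sub] at h ⊢
  linear_combination -h

end Lines

theorem finrank_span_triple_le_two_of_mem_span_pair {K V : Type*} [DivisionRing K]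
    [AddCommGroup V] [Module K V] {x y z : V} (h : z ∈ span K {x, y}) :
    finrank K (span K {x, y, z}) ≤ 2 := by
  classical
  rw [Set.pair_comm y z, Set.insert_comm, span_insert_eq_span h]
  have h₂ := (finrank_span_finset_le_card (R := K) ({x, y} : Finset V)).trans Finset.card_le_two
  rwa [Set.finrank, Finset.coe_pair] at h₂

section Subfield

variable {L : Type*} [Field L] (K : Subfield L)

theorem cross_mem {x y : L × L} (hx : x.1 ∈ K ∧ x.2 ∈ K) (hy : y.1 ∈ K ∧ y.2 ∈ K) :
    cross x y ∈ K :=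
  K.sub_mem (K.mul_mem hx.1 hy.2) (K.mul_mem hx.2 hy.1)

theorem mem_span_one_pair_of_mul_eq {a b c x y : L} (ha : a ∈ K) (hb : b ∈ K) (hc : c ∈ K)
    (ha0 : a ≠ 0) (h : a * y = b * x + c) : y ∈ span K {1, x} := by
  rw [mem_span_pair]
  refine ⟨⟨c / a, K.div_mem hc ha⟩, ⟨b / a, K.div_mem hb ha⟩, ?_⟩
  show c / a * 1 + b / a * x = y
  field_simp
  linear_combination -h

theorem finrank_span_one_le_two_of_cross_mem {d x : L × L} (hd : d.1 ∈ K ∧ d.2 ∈ K)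
    (hd0 : d ≠ 0) (hdx : cross d x ∈ K) : finrank K (span K {1, x.1, x.2}) ≤ 2 := by
  rcases eq_or_ne d.1 0 with hd₁ | hd₁
  · have hd₂ : d.2 ≠ 0 := fun hd₂ => hd0 (Prod.ext hd₁ hd₂)
    rw [Set.pair_comm]
    refine finrank_span_triple_le_two_of_mem_span_pair
      (mem_span_one_pair_of_mul_eq K hd.2 hd.1 (K.neg_mem hdx) hd₂ ?_)
    unfold cross
    ring
  · refine finrank_span_triple_le_two_of_mem_span_pair
      (mem_span_one_pair_of_mul_eq K hd.1 hd.2 hdx hd₁ ?_)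
    unfold cross
    ring

theorem mem_of_cross_mem_of_cross_ne_zero {d e x : L × L} (hd : d.1 ∈ K ∧ d.2 ∈ K) (he : e.1 ∈ K ∧ e.2 ∈ K)
    (hde : cross d e ≠ 0) (hdx : cross d x ∈ K) (hex : cross e x ∈ K) : x.1 ∈ K ∧ x.2 ∈ K := by
  have hx₁ : x.1 = (e.1 * cross d x - d.1 * cross e x) / cross d e := by
    rw [eq_div_iff hde]
    unfold cross
    ring
  have hx₂ : x.2 = (e.2 * cross d x - d.2 * cross e x) / cross d e := by
    rw [eq_div_iff hde]
    unfold cross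
    ring
  rw [hx₁, hx₂]
  exact ⟨K.div_mem (K.sub_mem (K.mul_mem he.1 hdx) (K.mul_mem hd.1 hex)) (cross_mem K hd he),
    K.div_mem (K.sub_mem (K.mul_mem he.2 hdx) (K.mul_mem hd.2 hex)) (cross_mem K hd he)⟩

end Subfield

theorem stmt3_general (K : Subfield ℝ)
    (P : Set (ℝ × ℝ)) (hP : ∀ p ∈ P, p.1 ∈ K ∧ p.2 ∈ K) (α : ℝ × ℝ) :
    ((∃ p ∈ P, ∃ q ∈ P, p ≠ q ∧ ∃ ℓ : Submodule ℝ (ℝ × ℝ), OnLine ℓ ∧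
        α + p ∈ ℓ ∧ α + q ∈ ℓ) →
      Module.finrank K (Submodule.span K ({1, α.1, α.2} : Set ℝ)) ≤ 2) ∧
    ((∃ ℓ₁ ℓ₂ : Submodule ℝ (ℝ × ℝ), ℓ₁ ≠ ℓ₂ ∧ OnLine ℓ₁ ∧ OnLine ℓ₂ ∧
        (∃ p ∈ P, ∃ q ∈ P, p ≠ q ∧ α + p ∈ ℓ₁ ∧ α + q ∈ ℓ₁) ∧
        (∃ p ∈ P, ∃ q ∈ P, p ≠ q ∧ α + p ∈ ℓ₂ ∧ α + q ∈ ℓ₂)) →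
      α.1 ∈ K ∧ α.2 ∈ K) := by
  have sub_mem {p q : ℝ × ℝ} (hp : p ∈ P) (hq : q ∈ P) : (q - p).1 ∈ K ∧ (q - p).2 ∈ K :=
    ⟨K.sub_mem (hP q hq).1 (hP p hp).1, K.sub_mem (hP q hq).2 (hP p hp).2⟩
  have cross_sub_mem {ℓ : Submodule ℝ (ℝ × ℝ)} (hℓ : OnLine ℓ) {p q : ℝ × ℝ} (hp : p ∈ P)
      (hq : q ∈ P) (hpℓ : α + p ∈ ℓ) (hqℓ : α + q ∈ ℓ) : cross (q - p) α ∈ K := by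
    rw [cross_sub_eq_of_add_mem hℓ hpℓ hqℓ]
    exact cross_mem K (hP p hp) (hP q hq)
  have direction_mem {ℓ : Submodule ℝ (ℝ × ℝ)} {p q : ℝ × ℝ} (hpℓ : α + p ∈ ℓ)
      (hqℓ : α + q ∈ ℓ) : q - p ∈ ℓ := by
    simpa using ℓ.sub_mem hqℓ hpℓ
  constructor
  · rintro ⟨p, hp, q, hq, hpq, ℓ, hℓ, hpℓ, hqℓ⟩
    exact finrank_span_one_le_two_of_cross_mem K (sub_mem hp hq) (sub_ne_zero.2 hpq.symm)
      (cross_sub_mem hℓ hp hq hpℓ hqℓ)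
  · rintro ⟨ℓ₁, ℓ₂, hne, hℓ₁, hℓ₂, ⟨p, hp, q, hq, hpq, hpℓ, hqℓ⟩, ⟨r, hr, s, hs, hrs, hrℓ, hsℓ⟩⟩
    refine mem_of_cross_mem_of_cross_ne_zero K (sub_mem hp hq) (sub_mem hr hs) ?_
      (cross_sub_mem hℓ₁ hp hq hpℓ hqℓ) (cross_sub_mem hℓ₂ hr hs hrℓ hsℓ)
    exact cross_ne_zero_of_mem_of_ne hℓ₁ hℓ₂ hne (direction_mem hpℓ hqℓ)
      (sub_ne_zero.2 hpq.symm) (direction_mem hrℓ hsℓ) (sub_ne_zero.2 hrs.symm)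

theorem stmt3 (K : Subfield ℝ) [FiniteDimensional ℚ K]
    (P : Set (ℝ × ℝ)) (hP : ∀ p ∈ P, p.1 ∈ K ∧ p.2 ∈ K) (α : ℝ × ℝ) :
    ((∃ p ∈ P, ∃ q ∈ P, p ≠ q ∧ ∃ ℓ : Submodule ℝ (ℝ × ℝ), OnLine ℓ ∧
        α + p ∈ ℓ ∧ α + q ∈ ℓ) →
      Module.finrank K (Submodule.span K ({1, α.1, α.2} : Set ℝ)) ≤ 2) ∧
    ((∃ ℓ₁ ℓ₂ : Submodule ℝ (ℝ × ℝ), ℓ₁ ≠ ℓ₂ ∧ OnLine ℓ₁ ∧ OnLine ℓ₂ ∧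
        (∃ p ∈ P, ∃ q ∈ P, p ≠ q ∧ α + p ∈ ℓ₁ ∧ α + q ∈ ℓ₁) ∧
        (∃ p ∈ P, ∃ q ∈ P, p ≠ q ∧ α + p ∈ ℓ₂ ∧ α + q ∈ ℓ₂)) →
      α.1 ∈ K ∧ α.2 ∈ K) :=
  stmt3_general K P hP α
end

section
/- Let P ⊂ ℝ^d be a locally finite point set, let C be a set of occlusion quotients for P, let T > 0 and let D ⊂ ℝ^d be a bounded set. Then there are only finitely many c ∈ C with P_* ∩ cP_* ∩ T·D ≠ ∅, in the sum Σ_{F ⊂ C, #F < ∞} (−1)^{#F} #((P_* ∩ ⋂_{c∈F} cP_*) ∩ T·D) over all finite subsets F of C only finitely many terms are nonzero (the empty set F = ∅ contributing #(P_* ∩ T·D)), and #(P̂ ∩ T·D) = Σ_{F ⊂ C, #F < ∞} (−1)^{#F} #((P_* ∩ ⋂_{c∈F} cP_*) ∩ T·D). -/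
open MeasureTheory Filter Pointwise

/-- `C ⊆ ℝ_{>1}` is a set of occlusion quotients for `P`: every invisible point of `P`
is a `c`-multiple of a point of `P` for some `c ∈ C`. -/
def IsOcclusionSet {d : ℕ} (P : Set (Fin d → ℝ)) (C : Set ℝ) : Prop :=
  C ⊆ Set.Ioi 1 ∧ ∀ x ∈ P \ visible P, ∃ c ∈ C, c⁻¹ • x ∈ P


/-! A point of `P_* ∩ T • D` is invisible exactly when it lies in some `c • P_*` with `c ∈ C`.
Only finitely many `c` can occur: `c ↦ c⁻¹ • x` is injective and lands in the bounded set
`P ∩ closedBall 0 ‖x‖`, and `P_* ∩ T • D` is finite. So the visible points are counted by a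
finite inclusion–exclusion over these quotients, and every other term of the sum vanishes. -/

open Finset in
theorem Set.indicator_compl_biUnion_eq_sum_powerset {ι α : Type*} [DecidableEq ι] (s : Finset ι)
    (B : ι → Set α) (a : α) :
    (⋃ i ∈ s, B i)ᶜ.indicator (1 : α → ℤ) a =
      ∑ t ∈ s.powerset, (-1) ^ #t * (⋂ i ∈ t, B i).indicator 1 a := by
  have h := prod_sub (fun _ => (1 : ℤ)) (fun i => (B i).indicator 1 a) s
  simp only [prod_const_one, mul_one, prod_indicator_apply] at h
  rw [← h, Set.compl_iUnion₂, ← prod_const_one (s := s) (M := α → ℤ), ← prod_indicator_apply]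
  simp [Set.indicator_compl]

theorem Set.Finite.ncard_inter_eq_sum_indicator {α : Type*} {A : Set α} (hA : A.Finite)
    (X : Set α) : ((A ∩ X).ncard : ℤ) = ∑ a ∈ hA.toFinset, X.indicator 1 a := by
  classical
  simp only [Set.indicator_apply, Pi.one_apply, Finset.sum_boole]
  rw [← Set.ncard_coe_finset]
  congr
  ext
  simp

open Finset in
theorem Set.Finite.ncard_diff_biUnion_eq_sum_powerset {ι α : Type*} [DecidableEq ι] {A : Set α}
    (hA : A.Finite) (s : Finset ι) (B : ι → Set α) :
    ((A \ ⋃ i ∈ s, B i).ncard : ℤ) =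
      ∑ t ∈ s.powerset, (-1) ^ #t * ((A ∩ ⋂ i ∈ t, B i).ncard : ℤ) := by
  simp_rw [Set.sdiff_eq, hA.ncard_inter_eq_sum_indicator,
    Set.indicator_compl_biUnion_eq_sum_powerset, mul_sum]
  exact sum_comm

theorem finsum_subtype_eq_sum_of_support_subset {α M : Type*} [AddCommMonoid M] {p : α → Prop}
    (g : α → M) {t : Finset α} (hsupp : ∀ a, p a → g a ≠ 0 → a ∈ t) (ht : ∀ a ∈ t, p a) :
    ∑ᶠ a : {a // p a}, g a = ∑ a ∈ t, g a :=
  (finsum_set_coe_eq_finsum_mem {a | p a}).trans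
    (finsum_mem_eq_sum_of_subset g (fun a ha => hsupp a ha.1 ha.2) ht)

section Visibility

variable {d : ℕ} {P : Set (Fin d → ℝ)} {C : Set ℝ}

theorem IsLocallyFinite.finite_setOf_inv_smul_mem (hP : IsLocallyFinite P) {x : Fin d → ℝ}
    (hx : x ≠ 0) : {c : ℝ | 1 < c ∧ c⁻¹ • x ∈ P}.Finite := by
  refine Set.Finite.of_finite_image (f := fun c : ℝ => c⁻¹ • x) ?_
    fun c _ c' _ h => inv_injective (smul_left_injective ℝ hx h)
  refine (hP _ (Metric.isBounded_closedBall (x := 0) (r := ‖x‖))).subset ?_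
  rintro _ ⟨c, ⟨hc, hcP⟩, rfl⟩
  refine ⟨hcP, ?_⟩
  rw [mem_closedBall_zero_iff, norm_smul, norm_inv, Real.norm_of_nonneg (by linarith)]
  exact mul_le_of_le_one_left (norm_nonneg x) (inv_le_one_of_one_le₀ hc.le)

theorem IsLocallyFinite.finite_setOf_inter_smul_nonempty (hP : IsLocallyFinite P)
    (hC : C ⊆ Set.Ioi 1) {A : Set (Fin d → ℝ)} (hA : Bornology.IsBounded A) :
    {c : ℝ | c ∈ C ∧ ((P \ {0}) ∩ c • (P \ {0}) ∩ A).Nonempty}.Finite := by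
  have hQA : ((P \ {0}) ∩ A).Finite :=
    (hP A hA).subset (Set.inter_subset_inter_left _ Set.sdiff_subset)
  refine (hQA.biUnion fun x hx => hP.finite_setOf_inv_smul_mem hx.1.2).subset ?_
  rintro c ⟨hcC, x, ⟨hxQ, y, hy, rfl⟩, hxA⟩
  have hc : 1 < c := hC hcC
  refine Set.mem_biUnion ⟨hxQ, hxA⟩ ⟨hc, ?_⟩
  rw [inv_smul_smul₀ (by positivity)]
  exact hy.1

theorem IsOcclusionSet.visible_eq (hC : IsOcclusionSet P C) :
    visible P = (P \ {0}) \ ⋃ c ∈ C, c • (P \ {0}) := by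
  ext x
  simp only [Set.mem_sdiff, Set.mem_iUnion, not_exists]
  constructor
  · rintro ⟨hxP, hvis⟩
    have hx0 : x ≠ 0 := by
      rintro rfl
      exact hvis (1 / 2) ⟨by norm_num, by norm_num⟩ (by simpa using hxP)
    refine ⟨⟨hxP, hx0⟩, ?_⟩
    rintro c hcC ⟨y, hy, rfl⟩
    have hc : 1 < c := hC.1 hcC
    refine hvis c⁻¹ ⟨by positivity, inv_lt_one_of_one_lt₀ hc⟩ ?_
    rw [inv_smul_smul₀ (by positivity)]
    exact hy.1
  · rintro ⟨⟨hxP, hx0⟩, hx⟩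
    by_contra hvis
    obtain ⟨c, hcC, hcx⟩ := hC.2 x ⟨hxP, hvis⟩
    have hc : c ≠ 0 := (zero_lt_one.trans (hC.1 hcC)).ne'
    refine hx c hcC ⟨c⁻¹ • x, ⟨hcx, ?_⟩, smul_inv_smul₀ hc x⟩
    simpa [hc] using hx0

theorem IsOcclusionSet.visible_inter_eq (hC : IsOcclusionSet P C) {A : Set (Fin d → ℝ)}
    {S : Set ℝ} (hSC : S ⊆ C)
    (hS : ∀ c ∈ C, ((P \ {0}) ∩ c • (P \ {0}) ∩ A).Nonempty → c ∈ S) :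
    visible P ∩ A = ((P \ {0}) ∩ A) \ ⋃ c ∈ S, c • (P \ {0}) := by
  rw [hC.visible_eq]
  ext x
  simp only [Set.mem_inter_iff, Set.mem_sdiff, Set.mem_iUnion, not_exists]
  constructor
  · rintro ⟨⟨hxQ, hx⟩, hxA⟩
    exact ⟨⟨hxQ, hxA⟩, fun c hcS => hx c (hSC hcS)⟩
  · rintro ⟨⟨hxQ, hxA⟩, hx⟩
    exact ⟨⟨hxQ, fun c hcC hxc => hx c (hS c hcC ⟨x, ⟨hxQ, hxc⟩, hxA⟩) hxc⟩, hxA⟩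

end Visibility

theorem stmt4_general {d : ℕ} (P : Set (Fin d → ℝ)) (hP : IsLocallyFinite P)
    (C : Set ℝ) (hC : IsOcclusionSet P C)
    (T : ℝ) (D : Set (Fin d → ℝ)) (hD : Bornology.IsBounded D) :
    {c : ℝ | c ∈ C ∧ ((P \ {0}) ∩ c • (P \ {0}) ∩ T • D).Nonempty}.Finite ∧
    (Function.support (fun F : {F : Finset ℝ // ↑F ⊆ C} =>
      ((-1 : ℤ) ^ (F : Finset ℝ).card *
        Nat.card ((P \ {0}) ∩ (⋂ c ∈ (F : Finset ℝ), c • (P \ {0})) ∩ T • D :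
          Set (Fin d → ℝ))))).Finite ∧
    (Nat.card (visible P ∩ T • D : Set (Fin d → ℝ)) : ℤ) =
      ∑ᶠ F : {F : Finset ℝ // ↑F ⊆ C},
        (-1 : ℤ) ^ (F : Finset ℝ).card *
          Nat.card ((P \ {0}) ∩ (⋂ c ∈ (F : Finset ℝ), c • (P \ {0})) ∩ T • D :
            Set (Fin d → ℝ)) := by
  have hTD : Bornology.IsBounded (T • D) := hD.smul₀ T
  have hfin := hP.finite_setOf_inter_smul_nonempty hC.1 hTD
  set S := hfin.toFinset
  have hSC : (S : Set ℝ) ⊆ C := fun c hc => (hfin.mem_toFinset.1 hc).1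
  set g : Finset ℝ → ℤ := fun F =>
    (-1) ^ F.card * Nat.card ((P \ {0}) ∩ (⋂ c ∈ F, c • (P \ {0})) ∩ T • D : Set (Fin d → ℝ))
  have hsupp : ∀ F : Finset ℝ, ↑F ⊆ C → g F ≠ 0 → F ∈ S.powerset := by
    intro F hFC hF
    obtain ⟨x, ⟨hxQ, hxF⟩, hxTD⟩ :=
      Set.nonempty_of_ncard_ne_zero (Nat.cast_ne_zero.1 (right_ne_zero_of_mul hF))
    exact Finset.mem_powerset.2 fun c hcF =>
      hfin.mem_toFinset.2 ⟨hFC hcF, x, ⟨hxQ, Set.mem_iInter₂.1 hxF c hcF⟩, hxTD⟩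
  refine ⟨hfin, (S.powerset.finite_toSet.preimage Subtype.val_injective.injOn).subset
    fun F hF => hsupp F.1 F.2 hF, ?_⟩
  have hQD : ((P \ {0}) ∩ T • D).Finite :=
    (hP _ hTD).subset (Set.inter_subset_inter_left _ Set.sdiff_subset)
  rw [finsum_subtype_eq_sum_of_support_subset g hsupp
      fun F hF => (Finset.coe_subset.2 (Finset.mem_powerset.1 hF)).trans hSC,
    hC.visible_inter_eq hSC fun c hcC hc => hfin.mem_toFinset.2 ⟨hcC, hc⟩,
    Finset.set_biUnion_coe, Nat.card_coe_set_eq, hQD.ncard_diff_biUnion_eq_sum_powerset]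
  refine Finset.sum_congr rfl fun t _ => ?_
  rw [Set.inter_right_comm, ← Nat.card_coe_set_eq]

theorem stmt4 {d : ℕ} (P : Set (Fin d → ℝ)) (hP : IsLocallyFinite P)
    (C : Set ℝ) (hC : IsOcclusionSet P C)
    (T : ℝ) (hT : 0 < T) (D : Set (Fin d → ℝ)) (hD : Bornology.IsBounded D) :
    {c : ℝ | c ∈ C ∧ ((P \ {0}) ∩ c • (P \ {0}) ∩ T • D).Nonempty}.Finite ∧
    (Function.support (fun F : {F : Finset ℝ // ↑F ⊆ C} =>
      ((-1 : ℤ) ^ (F : Finset ℝ).card *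
        Nat.card ((P \ {0}) ∩ (⋂ c ∈ (F : Finset ℝ), c • (P \ {0})) ∩ T • D :
          Set (Fin d → ℝ))))).Finite ∧
    (Nat.card (visible P ∩ T • D : Set (Fin d → ℝ)) : ℤ) =
      ∑ᶠ F : {F : Finset ℝ // ↑F ⊆ C},
        (-1 : ℤ) ^ (F : Finset ℝ).card *
          Nat.card ((P \ {0}) ∩ (⋂ c ∈ (F : Finset ℝ), c • (P \ {0})) ∩ T • D :
            Set (Fin d → ℝ)) :=
  stmt4_general P hP C hC T D hD
end

section
/- Let K ⊂ ℝ be a real quadratic number field with ring of integers O_K, nontrivial field automorphism σ, and norm N(x) = xσ(x). For any bounded sets W, D ⊂ ℝ², with W star-shaped with respect to the origin, there is a constant L such that for all T > 0 and all nonzero y ∈ O_K: #{x ∈ y·O_K² : x ≠ 0, σ(x) ∈ W, x ∈ T·D} ≤ L·T²/N(y)², where for x = (x₁,x₂) ∈ K² one writes σ(x) = (σ(x₁), σ(x₂)) ∈ ℝ². -/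
set_option synthInstance.maxHeartbeats 1000000
set_option maxHeartbeats 1000000

open MeasureTheory Pointwise


lemma countlem (V : Set ℝ) (A δ : ℝ) (hδ : 0 < δ) (hA0 : 0 ≤ A)
    (hA : ∀ v ∈ V, |v| ≤ A)
    (hsep : ∀ v ∈ V, ∀ w ∈ V, v ≠ w → δ ≤ |v - w|) :
    V.Finite ∧ (V.ncard : ℝ) ≤ 2 * A / δ + 2 := by
  have hinj : Set.InjOn (fun v : ℝ => ⌊v / δ⌋) V := by
    intro v hv w hw h
    by_contra hne
    have h1 : |v / δ - w / δ| < 1 := Int.abs_sub_lt_one_of_floor_eq_floor h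
    have h2 : |v - w| < δ := by
      have : v / δ - w / δ = (v - w) / δ := by ring
      rw [this, abs_div, abs_of_pos hδ, div_lt_one hδ] at h1
      exact h1
    exact absurd (hsep v hv w hw hne) (not_le.mpr h2)
  have hsub : (fun v : ℝ => ⌊v / δ⌋) '' V ⊆ Set.Icc ⌊-A / δ⌋ ⌊A / δ⌋ := by
    rintro _ ⟨v, hv, rfl⟩
    have h := abs_le.mp (hA v hv)
    constructor
    · exact Int.floor_le_floor (div_le_div_of_nonneg_right h.1 hδ.le)
    · exact Int.floor_le_floor (div_le_div_of_nonneg_right h.2 hδ.le)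
  have hfin : V.Finite := Set.Finite.of_finite_image ((Set.finite_Icc _ _).subset hsub) hinj
  refine ⟨hfin, ?_⟩
  have h1 : V.ncard = ((fun v : ℝ => ⌊v / δ⌋) '' V).ncard := (Set.ncard_image_of_injOn hinj).symm
  have h2 : ((fun v : ℝ => ⌊v / δ⌋) '' V).ncard ≤ (Set.Icc ⌊-A / δ⌋ ⌊A / δ⌋).ncard :=
    Set.ncard_le_ncard hsub (Set.finite_Icc _ _)
  have h3 : (Set.Icc ⌊-A / δ⌋ ⌊A / δ⌋).ncard = (⌊A / δ⌋ + 1 - ⌊-A / δ⌋).toNat := by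
    rw [show (Set.Icc ⌊-A / δ⌋ ⌊A / δ⌋) = ↑(Finset.Icc ⌊-A / δ⌋ ⌊A / δ⌋) by simp,
      Set.ncard_coe_finset, Int.card_Icc]
  have hb : ((⌊A / δ⌋ + 1 - ⌊-A / δ⌋).toNat : ℝ) ≤ 2 * A / δ + 2 := by
    have hmono : ⌊-A / δ⌋ ≤ ⌊A / δ⌋ :=
      Int.floor_le_floor (div_le_div_of_nonneg_right (by linarith) hδ.le)
    have hnn : (0:ℤ) ≤ ⌊A / δ⌋ + 1 - ⌊-A / δ⌋ := by omega
    rw [← Int.cast_natCast, Int.toNat_of_nonneg hnn]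
    push_cast
    have e1 : (⌊A / δ⌋ : ℝ) ≤ A / δ := Int.floor_le _
    have e2 : (-A / δ) - 1 < (⌊-A / δ⌋ : ℝ) := Int.sub_one_lt_floor _
    have h4 : (-A) / δ = -(A / δ) := by ring
    have h5 : (2:ℝ) * A / δ = A / δ + A / δ := by ring
    rw [h5]
    linarith
  calc (V.ncard : ℝ) ≤ ((Set.Icc ⌊-A / δ⌋ ⌊A / δ⌋).ncard : ℝ) := by
        rw [h1]; exact_mod_cast h2
    _ ≤ 2 * A / δ + 2 := by rw [h3]; exact hb


lemma normrat (K : Subfield ℝ) [FiniteDimensional ℚ K] (hrank : Module.finrank ℚ K = 2)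
    (σ : K →+* K) (hσ : σ ≠ RingHom.id K) (z : K) : ∃ r : ℚ, z * σ z = (r : K) := by
  obtain ⟨α, hα⟩ : ∃ α : K, σ α ≠ α := by
    by_contra h
    push_neg at h
    exact hσ (RingHom.ext h)
  have hQ : ∀ q : ℚ, σ (q : K) = (q : K) := fun q => map_ratCast σ q
  have hsmul : ∀ (q : ℚ) (x : K), q • x = (q : K) * x := fun q x => Rat.smul_def q x
  have hli : LinearIndependent ℚ ![(1 : K), α] := by
    rw [LinearIndependent.pair_iff]
    intro s t hst
    rw [hsmul, hsmul, mul_one] at hst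
    by_cases ht : t = 0
    · subst ht
      push_cast at hst
      have hs : (s : K) = 0 := by linear_combination hst
      exact ⟨by exact_mod_cast hs, rfl⟩
    · exfalso
      apply hα
      have ht' : ((t : K)) ≠ 0 := by exact_mod_cast ht
      have hαval : α = ((-s / t : ℚ) : K) := by
        push_cast
        field_simp
        linear_combination hst
      rw [hαval, hQ]
  have hcard : Fintype.card (Fin 2) = Module.finrank ℚ K := by simp [hrank]
  let B := basisOfLinearIndependentOfCardEqFinrank hli hcard
  have hspan : Submodule.span ℚ ({(1 : K), α} : Set K) = ⊤ := by
    have := B.span_eq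
    rw [coe_basisOfLinearIndependentOfCardEqFinrank] at this
    rw [← this]
    congr 1
    simp [Matrix.range_cons, Matrix.range_empty, Set.pair_comm]
  have hmem : ∀ x : K, ∃ c d : ℚ, c • (1 : K) + d • α = x := by
    intro x
    have : x ∈ Submodule.span ℚ ({(1 : K), α} : Set K) := hspan ▸ Submodule.mem_top
    exact Submodule.mem_span_pair.mp this
  obtain ⟨q, p, hqp⟩ := hmem (α ^ 2)
  rw [hsmul, hsmul, mul_one] at hqp
  -- hqp : q + p α = α^2
  have h1 : (σ α) ^ 2 = (q : K) + (p : K) * σ α := by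
    have h1' := congrArg σ hqp
    rw [map_add, map_mul, map_pow, hQ, hQ] at h1'
    exact h1'.symm
  have hσα : σ α = (p : K) - α := by
    have hfac : (α - σ α) * (α + σ α - (p : K)) = 0 := by
      linear_combination -hqp - h1
    rcases mul_eq_zero.mp hfac with h | h
    · exact absurd (sub_eq_zero.mp h).symm hα
    · linear_combination h
  obtain ⟨c, d, hcd⟩ := hmem z
  rw [hsmul, hsmul, mul_one] at hcd
  refine ⟨c ^ 2 + c * d * p - d ^ 2 * q, ?_⟩
  have hz : z = (c : K) + (d : K) * α := hcd.symm
  rw [hz, map_add, map_mul, hQ, hQ, hσα]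
  push_cast
  linear_combination ((d : K) ^ 2) * hqp



lemma normge1 (K : Subfield ℝ) [FiniteDimensional ℚ K] (hrank : Module.finrank ℚ K = 2)
    (σ : K →+* K) (hσ : σ ≠ RingHom.id K) (z : K) (hz : z ∈ integralClosure ℤ K)
    (hz0 : z ≠ 0) : 1 ≤ |(z : ℝ)| * |((σ z : K) : ℝ)| := by
  obtain ⟨r, hr⟩ := normrat K hrank σ hσ z
  have hzi : IsIntegral ℤ z := hz
  have hσzi : IsIntegral ℤ (σ z) := hzi.map σ.toIntAlgHom
  have hprod : IsIntegral ℤ (z * σ z) := hzi.mul hσzi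
  rw [hr] at hprod
  have hrK : ((r : K)) = algebraMap ℚ K r := (eq_ratCast (algebraMap ℚ K) r).symm
  rw [hrK] at hprod
  have hri : IsIntegral ℤ r :=
    (isIntegral_algebraMap_iff (algebraMap ℚ K).injective).mp hprod
  obtain ⟨n, hn⟩ := IsIntegrallyClosed.isIntegral_iff.mp hri
  have hn' : (n : ℚ) = r := by rw [← hn]; exact (eq_intCast (algebraMap ℤ ℚ) n)
  have hσz0 : σ z ≠ 0 := fun h => hz0 (by
    have := map_zero σ
    exact σ.injective (h.trans this.symm))
  have hne : z * σ z ≠ 0 := mul_ne_zero hz0 hσz0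
  have hr0 : r ≠ 0 := by
    intro h
    rw [h] at hr
    exact hne (by exact_mod_cast hr)
  have hn0 : n ≠ 0 := fun h => hr0 (by rw [← hn', h]; norm_num)
  have hcast : ((z * σ z : K) : ℝ) = ((n : ℤ) : ℝ) := by
    rw [hr, ← hn']
    norm_cast
  rw [← abs_mul]
  have : (z : ℝ) * ((σ z : K) : ℝ) = ((z * σ z : K) : ℝ) := by push_cast; ring
  rw [this, hcast]
  rw [← abs_one]
  have h1 : (1 : ℤ) ≤ |n| := Int.one_le_abs hn0
  rw [abs_one]
  calc (1 : ℝ) = ((1 : ℤ) : ℝ) := by norm_num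
    _ ≤ ((|n| : ℤ) : ℝ) := by exact_mod_cast h1
    _ = |((n : ℤ) : ℝ)| := by push_cast; ring



theorem stmt6 (K : Subfield ℝ) [FiniteDimensional ℚ K] (hrank : Module.finrank ℚ K = 2)
    (σ : K →+* K) (hσ : σ ≠ RingHom.id K)
    (W D : Set (ℝ × ℝ)) (hWbdd : Bornology.IsBounded W) (hDbdd : Bornology.IsBounded D)
    (hstar : ∀ x ∈ W, ∀ t : ℝ, t ∈ Set.Icc (0:ℝ) 1 → t • x ∈ W) :
    ∃ L : ℝ, ∀ T : ℝ, 0 < T → ∀ y : K, y ∈ integralClosure ℤ K → y ≠ 0 →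
      (Nat.card {p : ℝ × ℝ | ∃ z₁ ∈ integralClosure ℤ K, ∃ z₂ ∈ integralClosure ℤ K,
          p = (((y * z₁ : K) : ℝ), ((y * z₂ : K) : ℝ)) ∧ p ≠ 0 ∧
          (((σ (y * z₁) : K) : ℝ), ((σ (y * z₂) : K) : ℝ)) ∈ W ∧ p ∈ T • D} : ℝ) ≤
        L * T ^ 2 / ((y : ℝ) * ((σ y : K) : ℝ)) ^ 2 := by
  obtain ⟨CW₀, hCW₀⟩ := hWbdd.exists_norm_le
  obtain ⟨CD₀, hCD₀⟩ := hDbdd.exists_norm_le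
  set CW : ℝ := max CW₀ 1 with hCWdef
  set CD : ℝ := max CD₀ 1 with hCDdef
  have hCW1 : (1 : ℝ) ≤ CW := le_max_right _ _
  have hCD1 : (1 : ℝ) ≤ CD := le_max_right _ _
  have hCW0 : (0 : ℝ) < CW := lt_of_lt_of_le one_pos hCW1
  have hCD0 : (0 : ℝ) < CD := lt_of_lt_of_le one_pos hCD1
  have hWb : ∀ w ∈ W, ‖w‖ ≤ CW := fun w hw => (hCW₀ w hw).trans (le_max_left _ _)
  have hDb : ∀ d ∈ D, ‖d‖ ≤ CD := fun d hd => (hCD₀ d hd).trans (le_max_left _ _)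
  refine ⟨36 * CD ^ 2 * CW ^ 2, ?_⟩
  intro T hT y hy hy0
  set S : Set (ℝ × ℝ) := {p : ℝ × ℝ | ∃ z₁ ∈ integralClosure ℤ K, ∃ z₂ ∈ integralClosure ℤ K,
          p = (((y * z₁ : K) : ℝ), ((y * z₂ : K) : ℝ)) ∧ p ≠ 0 ∧
          (((σ (y * z₁) : K) : ℝ), ((σ (y * z₂) : K) : ℝ)) ∈ W ∧ p ∈ T • D} with hSdef
  have hσy0 : σ y ≠ 0 := fun h => hy0 (σ.injective (h.trans (map_zero σ).symm))
  have hyR : ((y : K) : ℝ) ≠ 0 := fun h => hy0 (by exact_mod_cast h)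
  have hσyR : (((σ y : K)) : ℝ) ≠ 0 := fun h => hσy0 (by exact_mod_cast h)
  set m : ℝ := |(y : ℝ) * ((σ y : K) : ℝ)| with hmdef
  have hm0 : (0 : ℝ) < m := abs_pos.mpr (mul_ne_zero hyR hσyR)
  have hden : ((y : ℝ) * ((σ y : K) : ℝ)) ^ 2 = m ^ 2 := (sq_abs _).symm
  have hRHSnn : (0 : ℝ) ≤ 36 * CD ^ 2 * CW ^ 2 * T ^ 2 / ((y : ℝ) * ((σ y : K) : ℝ)) ^ 2 := by
    positivity
  by_cases hSe : S = ∅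
  · rw [hSe]
    simpa using hRHSnn
  -- the set of admissible coordinates
  set V : Set ℝ := {v : ℝ | ∃ z ∈ integralClosure ℤ K, v = ((y * z : K) : ℝ) ∧
      |v| ≤ T * CD ∧ |((σ (y * z) : K) : ℝ)| ≤ CW} with hVdef
  have hsub : S ⊆ V ×ˢ V := by
    rintro p ⟨z₁, hz₁, z₂, hz₂, hpe, hp0, hpW, hpD⟩
    obtain ⟨d, hd, hpd⟩ := hpD
    have hd1 : |d.1| ≤ CD := le_trans (by exact_mod_cast norm_fst_le d) (hDb d hd)
    have hd2 : |d.2| ≤ CD := le_trans (by exact_mod_cast norm_snd_le d) (hDb d hd)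
    have hp1 : |p.1| ≤ T * CD := by
      rw [← hpd]
      have : (T • d).1 = T * d.1 := rfl
      rw [this, abs_mul, abs_of_pos hT]
      exact mul_le_mul_of_nonneg_left hd1 hT.le
    have hp2 : |p.2| ≤ T * CD := by
      rw [← hpd]
      have : (T • d).2 = T * d.2 := rfl
      rw [this, abs_mul, abs_of_pos hT]
      exact mul_le_mul_of_nonneg_left hd2 hT.le
    have hw1 : |((σ (y * z₁) : K) : ℝ)| ≤ CW :=
      le_trans (by exact_mod_cast norm_fst_le ((((σ (y * z₁) : K) : ℝ), ((σ (y * z₂) : K) : ℝ)))) (hWb _ hpW)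
    have hw2 : |((σ (y * z₂) : K) : ℝ)| ≤ CW :=
      le_trans (by exact_mod_cast norm_snd_le ((((σ (y * z₁) : K) : ℝ), ((σ (y * z₂) : K) : ℝ)))) (hWb _ hpW)
    constructor
    · exact ⟨z₁, hz₁, by rw [hpe], by rw [hpe] at hp1 ⊢; exact hp1, hw1⟩
    · exact ⟨z₂, hz₂, by rw [hpe], by rw [hpe] at hp2 ⊢; exact hp2, hw2⟩
  have hbound : ∀ v ∈ V, |v| ≤ T * CD := by
    rintro v ⟨z, hz, rfl, hv1, hv2⟩
    exact hv1
  have hsep : ∀ v ∈ V, ∀ w ∈ V, v ≠ w → m / (2 * CW) ≤ |v - w| := by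
    rintro v ⟨z, hz, rfl, hv1, hv2⟩ w ⟨z', hz', rfl, hw1, hw2⟩ hvw
    have hzz : z ≠ z' := by
      rintro rfl
      exact hvw rfl
    have hu0 : z - z' ≠ 0 := sub_ne_zero.mpr hzz
    have hu : z - z' ∈ integralClosure ℤ K := sub_mem hz hz'
    have key := normge1 K hrank σ hσ (z - z') hu hu0
    have e1 : ((y * z : K) : ℝ) - ((y * z' : K) : ℝ) = (y : ℝ) * (((z - z' : K)) : ℝ) := by
      push_cast
      ring
    have e2 : ((σ (y * z) : K) : ℝ) - ((σ (y * z') : K) : ℝ)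
        = (((σ y : K)) : ℝ) * (((σ (z - z') : K)) : ℝ) := by
      have : σ (y * z) - σ (y * z') = σ y * σ (z - z') := by
        rw [← map_sub, ← map_mul, mul_sub]
      calc ((σ (y * z) : K) : ℝ) - ((σ (y * z') : K) : ℝ)
          = (((σ (y * z) - σ (y * z') : K)) : ℝ) := by push_cast; ring
        _ = (((σ y * σ (z - z') : K)) : ℝ) := by rw [this]
        _ = (((σ y : K)) : ℝ) * (((σ (z - z') : K)) : ℝ) := by push_cast; ring
    have hσbd : |((σ (y * z) : K) : ℝ) - ((σ (y * z') : K) : ℝ)| ≤ 2 * CW := by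
      calc |((σ (y * z) : K) : ℝ) - ((σ (y * z') : K) : ℝ)|
          ≤ |((σ (y * z) : K) : ℝ)| + |((σ (y * z') : K) : ℝ)| := abs_sub _ _
        _ ≤ 2 * CW := by linarith
    rw [div_le_iff₀ (by linarith)]
    have habs : |((y * z : K) : ℝ) - ((y * z' : K) : ℝ)|
        * |((σ (y * z) : K) : ℝ) - ((σ (y * z') : K) : ℝ)| = m * (|(((z - z' : K)) : ℝ)| * |(((σ (z - z') : K)) : ℝ)|) := by
      rw [e1, e2, abs_mul, abs_mul, hmdef, abs_mul]
      ring
    nlinarith [abs_nonneg (((y * z : K) : ℝ) - ((y * z' : K) : ℝ)),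
      abs_nonneg (((σ (y * z) : K) : ℝ) - ((σ (y * z') : K) : ℝ)), hm0.le,
      mul_le_mul_of_nonneg_left hσbd (abs_nonneg (((y * z : K) : ℝ) - ((y * z' : K) : ℝ)))]
  have hmle : m ≤ T * CD * CW := by
    obtain ⟨p, hp⟩ := Set.nonempty_iff_ne_empty.mpr hSe
    obtain ⟨z₁, hz₁, z₂, hz₂, hpe, hp0, hpW, hpD⟩ := hp
    have hpV := hsub (by exact ⟨z₁, hz₁, z₂, hz₂, hpe, hp0, hpW, hpD⟩)
    have hkey : ∀ v ∈ V, v ≠ 0 → m ≤ T * CD * CW := by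
      rintro v ⟨z, hz, rfl, hv1, hv2⟩ hv0
      have hz0 : z ≠ 0 := by
        rintro rfl
        apply hv0
        push_cast
        ring
      have key := normge1 K hrank σ hσ z hz hz0
      have e1 : |((y * z : K) : ℝ)| = |(y : ℝ)| * |(z : ℝ)| := by
        push_cast [abs_mul]
        try rfl
      have e2 : |((σ (y * z) : K) : ℝ)| = |(((σ y : K)) : ℝ)| * |(((σ z : K)) : ℝ)| := by
        rw [map_mul]
        push_cast [abs_mul]
        try rfl
      have hmm : m = |(y : ℝ)| * |(((σ y : K)) : ℝ)| := by rw [hmdef, abs_mul]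
      have h5 : m * 1 ≤ m * (|(z : ℝ)| * |(((σ z : K)) : ℝ)|) :=
        mul_le_mul_of_nonneg_left key hm0.le
      have h6 : m * (|(z : ℝ)| * |(((σ z : K)) : ℝ)|)
          = |((y * z : K) : ℝ)| * |((σ (y * z) : K) : ℝ)| := by
        rw [e1, e2, hmm]; ring
      have h7 : |((y * z : K) : ℝ)| * |((σ (y * z) : K) : ℝ)| ≤ (T * CD) * CW :=
        mul_le_mul hv1 hv2 (abs_nonneg _) (by positivity)
      linarith
    have hne : p.1 ≠ 0 ∨ p.2 ≠ 0 := by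
      by_contra h
      push_neg at h
      exact hp0 (Prod.ext h.1 h.2)
    rcases hne with h | h
    · exact hkey p.1 hpV.1 h
    · exact hkey p.2 hpV.2 h
  have hδ0 : 0 < m / (2 * CW) := by positivity
  obtain ⟨hVfin, hVcard⟩ := countlem V (T * CD) (m / (2 * CW)) hδ0 (by positivity) hbound hsep
  -- cardinality chain
  have hprodfin : (V ×ˢ V).Finite := hVfin.prod hVfin
  have hScard : (Nat.card S : ℝ) ≤ (V.ncard : ℝ) * (V.ncard : ℝ) := by
    have h1 : Nat.card S = S.ncard := Nat.card_coe_set_eq S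
    have h2 : S.ncard ≤ (V ×ˢ V).ncard := Set.ncard_le_ncard hsub hprodfin
    have h3 : (V ×ˢ V).ncard = V.ncard * V.ncard := by
      have h4 := Nat.card_congr (Equiv.Set.prod V V)
      rw [Nat.card_prod] at h4
      simpa [Nat.card_coe_set_eq] using h4
    rw [h1]
    exact_mod_cast h3 ▸ h2
  have hX1 : 1 ≤ T * CD * CW / m := (one_le_div hm0).mpr hmle
  have hVle : (V.ncard : ℝ) ≤ 6 * (T * CD * CW / m) := by
    have : 2 * (T * CD) / (m / (2 * CW)) = 4 * (T * CD * CW / m) := by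
      field_simp
      ring
    rw [this] at hVcard
    linarith
  have hfinal : (Nat.card S : ℝ) ≤ 36 * (T * CD * CW / m) ^ 2 := by
    have hnn : (0 : ℝ) ≤ (V.ncard : ℝ) := Nat.cast_nonneg _
    nlinarith [hScard, hVle, hnn]
  calc (Nat.card S : ℝ) ≤ 36 * (T * CD * CW / m) ^ 2 := hfinal
    _ = 36 * CD ^ 2 * CW ^ 2 * T ^ 2 / ((y : ℝ) * ((σ y : K) : ℝ)) ^ 2 := by
      rw [hden]
      field_simp
end

section
/- Every prime element π of ℤ[τ] with 1 < π < τ satisfies |σ(π)| ≥ 2τ, where τ = (1 + √5)/2 is the golden ratio and σ is the nontrivial automorphism of ℚ(√5) (so σ(τ) = 1 − τ). -/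
/-!
Write `x = a + bτ`, so that `x - σ(x) = b(2τ - 1) = b√5`. If `1 < x < τ` and `|σ(x)| < 2τ`, then
`b(2τ - 1)` lies strictly between `1 - 2τ` and `3τ`, which forces `b ∈ {0, 1, 2}`. The bounds
`1 < a + bτ < τ` leave no integer `a` for `b = 0, 1`, and only `a = -2` for `b = 2`; but
`σ(2τ - 2) = -2τ`.
-/

/-- The golden ratio `τ = (1 + √5)/2`. -/
noncomputable def tau : ℝ := (1 + Real.sqrt 5) / 2

/-- The ring `ℤ[τ]`, the ring of integers of `ℚ(√5)`, realised as a subring of `ℝ`. -/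
def Ztau : Subring ℝ := Subring.closure {tau}

theorem one_lt_tau : 1 < tau := Real.one_lt_goldenRatio

theorem tau_lt_two : tau < 2 := Real.goldenRatio_lt_two

theorem two_mul_tau_le_abs_conj_of_one_lt_of_lt_tau {a b : ℤ}
    (h1 : 1 < (a : ℝ) + b * tau) (h2 : (a : ℝ) + b * tau < tau) :
    2 * tau ≤ |(a : ℝ) + b * (1 - tau)| := by
  have hτ1 := one_lt_tau
  have hτ2 := tau_lt_two
  by_contra! hconj
  obtain ⟨hconj_lo, hconj_hi⟩ := abs_lt.mp hconj
  have hsqrt5 : (0 : ℝ) < 2 * tau - 1 := by linarith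
  have hb_lo : -1 < b := by
    have : (-1 : ℝ) * (2 * tau - 1) < b * (2 * tau - 1) := by linarith
    exact_mod_cast lt_of_mul_lt_mul_right this hsqrt5.le
  have hb_hi : b < 3 := by
    have : (b : ℝ) * (2 * tau - 1) < 3 * (2 * tau - 1) := by linarith
    exact_mod_cast lt_of_mul_lt_mul_right this hsqrt5.le
  interval_cases b
  · have ha_lo : 1 < a := by exact_mod_cast (by push_cast at h1; linarith : (1 : ℝ) < a)
    have ha_hi : a < 2 := by exact_mod_cast (by push_cast at h2; linarith : (a : ℝ) < 2)
    omega
  · have ha_lo : -1 < a := by exact_mod_cast (by push_cast at h1; linarith : (-1 : ℝ) < a)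
    have ha_hi : a < 0 := by exact_mod_cast (by push_cast at h2; linarith : (a : ℝ) < 0)
    omega
  · have ha_lo : -3 < a := by exact_mod_cast (by push_cast at h1; linarith : (-3 : ℝ) < a)
    have ha_hi : a < -1 := by exact_mod_cast (by push_cast at h2; linarith : (a : ℝ) < -1)
    obtain rfl : a = -2 := by omega
    push_cast at hconj_lo
    linarith

theorem stmt11_general (π : Ztau)
    (h1 : 1 < (π : ℝ)) (h2 : (π : ℝ) < tau) :
    ∀ a b : ℤ, (π : ℝ) = (a : ℝ) + (b : ℝ) * tau →
      2 * tau ≤ |(a : ℝ) + (b : ℝ) * (1 - tau)| := by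
  intro a b hπ
  rw [hπ] at h1 h2
  exact two_mul_tau_le_abs_conj_of_one_lt_of_lt_tau h1 h2

/-- Every prime element `π` of `ℤ[τ]` with `1 < π < τ` satisfies `|σ(π)| ≥ 2τ`, where
`σ` is the nontrivial automorphism of `ℚ(√5)`, so that `σ(a + bτ) = a + b(1 - τ)`. -/
theorem stmt11 (π : Ztau) (hπ : Prime π)
    (h1 : 1 < (π : ℝ)) (h2 : (π : ℝ) < tau) :
    ∀ a b : ℤ, (π : ℝ) = (a : ℝ) + (b : ℝ) * tau →
      2 * tau ≤ |(a : ℝ) + (b : ℝ) * (1 - tau)| :=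
  stmt11_general π h1 h2
end
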